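/- arXiv:2011.10161 — 2 statements merged into one kernel-verified Lean document; each statement's English description precedes it below -/
import Mathlib

section
/- Let n be a positive integer, γ ∈ [0,1), κ ∈ (0,1), and χ a real number. Let s be a positive integer and let 0 = α̃_1 < b̃_1 < α̃_2 < b̃_2 < … < α̃_s < b̃_s be real numbers with Σ_{i=1}^{s}(b̃_i − α̃_i) = 1. Let I be a finite index set with |I| ≤ n, and let c_i > 0 be a real number for each i ∈ I. For t ∈ ℂ with t ∉ {b̃_1,…,b̃_s}, define Φ_s(t) = Π_{i=1}^{s} (t − α̃_i)/(t − b̃_i). Then the set of non-real complex numbers t (i.e. with nonzero imaginary part) such that t ∉ {b̃_1,…,b̃_s}, Φ_s(t) ≠ 1, Φ_s(t) ≠ −c_i for all i ∈ I, and t − κ·Φ_s(t)/(Φ_s(t) − 1) + (κ/(n(1−γ))) · Σ_{i∈I} Φ_s(t)/(Φ_s(t) + c_i) = (χ − γ(1−κ))/(1−γ), has cardinality at most 2. In particular, this system of equations has at most one pair of complex conjugate non-real roots. -/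
/-!
For `t` in the upper half plane, `x ↦ arg (t - x)` increases from `0` to `π`, so the interlacing
`α̃_1 < b̃_1 < ⋯ < α̃_s < b̃_s` puts the angle `∑ (arg (t - α̃_i) - arg (t - b̃_i))` of `Φ_s(t)`
in `(-π, 0)`: `Φ_s` maps the upper half plane into the lower one. Solved for `t`, the equation
says that `t` is a fixed point of `R ∘ Φ_s`, where `R(w) = A + κ w / (w - 1) - β ∑ w / (w + c_i)`
maps the lower half plane into the upper one. By the Schwarz lemma (after a Cayley transform) a
holomorphic self-map of the upper half plane with two fixed points is the identity; but
`t (Φ_s(t) - 1) → ∑ (b̃_i - α̃_i) = 1` at infinity, so `R (Φ_s t) / t → κ ≠ 1`. Hence there is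
at most one root in the upper half plane, and by conjugation symmetry at most one in the lower.
-/

open Finset Complex Metric Filter Topology Bornology
open scoped ComplexConjugate

namespace Complex

lemma arg_mem_Ioo_of_im_pos {z : ℂ} (hz : 0 < z.im) : arg z ∈ Set.Ioo 0 Real.pi :=
  ⟨(arg_nonneg_iff.2 hz.le).lt_of_ne (fun h => hz.ne' (arg_eq_zero_iff.1 h.symm).2),
    arg_lt_pi_iff.2 (Or.inr hz.ne')⟩

lemma arg_eq_pi_div_two_sub_arctan {z : ℂ} (hz : 0 < z.im) :
    arg z = Real.pi / 2 - Real.arctan (z.re / z.im) := by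
  obtain ⟨h₀, hπ⟩ := arg_mem_Ioo_of_im_pos hz
  have hz₀ : z ≠ 0 := fun h => by simp [h] at hz
  have htan : z.re / z.im = Real.tan (Real.pi / 2 - arg z) := by
    rw [Real.tan_pi_div_two_sub, Real.tan_eq_sin_div_cos, inv_div, cos_arg hz₀, sin_arg,
      div_div_div_cancel_right₀ (norm_ne_zero_iff.2 hz₀)]
  rw [htan, Real.arctan_tan (by linarith) (by linarith)]
  ring

lemma strictMono_arg_sub_ofReal {t : ℂ} (ht : 0 < t.im) :
    StrictMono fun x : ℝ => arg (t - x) := by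
  intro x y hxy
  have him : ∀ u : ℝ, 0 < (t - u).im := by simpa using ht
  dsimp only
  rw [arg_eq_pi_div_two_sub_arctan (him x), arg_eq_pi_div_two_sub_arctan (him y)]
  have := Real.arctan_strictMono (div_lt_div_of_pos_right (by linarith : t.re - y < t.re - x) ht)
  simp only [sub_re, ofReal_re, sub_im, ofReal_im, sub_zero]
  linarith

lemma im_prod_div {ι : Type*} (J : Finset ι) (w v : ι → ℂ) :
    (∏ i ∈ J, w i / v i).im
      = (∏ i ∈ J, ‖w i‖ / ‖v i‖) * Real.sin (∑ i ∈ J, (arg (w i) - arg (v i))) := by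
  have hpolar (i : ι) :
      w i / v i = ((‖w i‖ / ‖v i‖ : ℝ) : ℂ) * exp ((arg (w i) - arg (v i) : ℝ) * I) := by
    conv_lhs => rw [← norm_mul_exp_arg_mul_I (w i), ← norm_mul_exp_arg_mul_I (v i)]
    rw [mul_div_mul_comm, ← exp_sub, ofReal_div]
    push_cast
    ring_nf
  rw [prod_congr rfl fun i _ => hpolar i, prod_mul_distrib, ← ofReal_prod, ← exp_sum,
    ← sum_mul, ← ofReal_sum, im_ofReal_mul, exp_ofReal_mul_I_im]

lemma sub_ofReal_ne_zero {t : ℂ} (ht : t.im ≠ 0) (x : ℝ) : t - x ≠ 0 :=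
  fun h => ht (by simpa using congrArg im h)

end Complex

section Interlacing

variable {s : ℕ} {a b : ℕ → ℝ}

lemma sum_sub_le_of_interlacing {θ : ℝ → ℝ} (hθ : Monotone θ)
    (hba : ∀ i, 1 ≤ i → i < s → b i < a (i + 1)) {m : ℕ} (hm : 1 ≤ m) (hms : m ≤ s) :
    ∑ i ∈ Icc 1 m, (θ (b i) - θ (a i)) ≤ θ (b m) - θ (a 1) := by
  induction m, hm using Nat.le_induction with
  | base => simp
  | succ m hm ih =>
    rw [sum_Icc_succ_top (by omega)]
    have := hθ (hba m hm (by omega)).le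
    linarith [ih (by omega)]

lemma sum_sub_mem_Ioo_of_interlacing {θ : ℝ → ℝ} (hθ : StrictMono θ)
    (hrange : ∀ x, θ x ∈ Set.Ioo 0 Real.pi) (hs : 0 < s)
    (hab : ∀ i, 1 ≤ i → i ≤ s → a i < b i) (hba : ∀ i, 1 ≤ i → i < s → b i < a (i + 1)) :
    ∑ i ∈ Icc 1 s, (θ (b i) - θ (a i)) ∈ Set.Ioo 0 Real.pi := by
  refine ⟨sum_pos (fun i hi => ?_) (nonempty_Icc.2 hs), ?_⟩
  · obtain ⟨hi₁, his⟩ := mem_Icc.1 hi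
    exact sub_pos.2 (hθ (hab i hi₁ his))
  · have := sum_sub_le_of_interlacing hθ.monotone hba hs le_rfl
    linarith [(hrange (b s)).2, (hrange (a 1)).1]

end Interlacing

namespace Complex

lemma im_prod_div_sub_ofReal_neg {t : ℂ} (ht : 0 < t.im) {s : ℕ} {a b : ℕ → ℝ} (hs : 0 < s)
    (hab : ∀ i, 1 ≤ i → i ≤ s → a i < b i) (hba : ∀ i, 1 ≤ i → i < s → b i < a (i + 1)) :
    (∏ i ∈ Icc 1 s, (t - a i) / (t - b i)).im < 0 := by
  rw [im_prod_div]
  have hangle := sum_sub_mem_Ioo_of_interlacing (strictMono_arg_sub_ofReal ht)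
    (fun x => arg_mem_Ioo_of_im_pos (by simpa using ht)) hs hab hba
  have hsin : Real.sin (∑ i ∈ Icc 1 s, (arg (t - a i) - arg (t - b i))) < 0 := by
    have hneg : ∑ i ∈ Icc 1 s, (arg (t - a i) - arg (t - b i))
        = -∑ i ∈ Icc 1 s, (arg (t - b i) - arg (t - a i)) := by
      rw [← sum_neg_distrib]; simp only [neg_sub]
    rw [hneg, Real.sin_neg, neg_lt_zero]
    exact Real.sin_pos_of_pos_of_lt_pi hangle.1 hangle.2
  refine mul_neg_of_pos_of_neg (prod_pos fun i _ => ?_) hsin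
  exact div_pos (norm_pos_iff.2 (sub_ofReal_ne_zero ht.ne' _))
    (norm_pos_iff.2 (sub_ofReal_ne_zero ht.ne' _))

lemma differentiableAt_prod_div_sub_ofReal {ι : Type*} (J : Finset ι) (a b : ι → ℝ) {t : ℂ}
    (ht : t.im ≠ 0) : DifferentiableAt ℂ (fun z : ℂ => ∏ i ∈ J, (z - a i) / (z - b i)) t := by
  have hne := sub_ofReal_ne_zero ht
  fun_prop (disch := exact hne _)

lemma prod_div_sub_ofReal_conj {ι : Type*} (J : Finset ι) (a b : ι → ℝ) (t : ℂ) :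
    ∏ i ∈ J, (conj t - a i) / (conj t - b i) = conj (∏ i ∈ J, (t - a i) / (t - b i)) := by
  simp [map_prod]

end Complex

section Asymptotics

variable {α ι : Type*} {l : Filter α} {g : α → ℂ}

lemma tendsto_one_of_tendsto_mul_sub_one (hg : Tendsto g l (cobounded ℂ)) {f : α → ℂ} {d : ℂ}
    (h : Tendsto (fun x => g x * (f x - 1)) l (𝓝 d)) : Tendsto f l (𝓝 1) := by
  have hlim := tendsto_const_nhds (x := (1 : ℂ)).add ((tendsto_inv₀_cobounded.comp hg).mul h)
  rw [zero_mul, add_zero] at hlim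
  refine hlim.congr' ((hg.eventually_ne_cobounded 0).mono fun x hx => ?_)
  simp only [Function.comp_apply]
  field_simp
  ring

lemma tendsto_mul_prod_sub_one (hg : Tendsto g l (cobounded ℂ)) (J : Finset ι) {f : ι → α → ℂ}
    {d : ι → ℂ} (h : ∀ i ∈ J, Tendsto (fun x => g x * (f i x - 1)) l (𝓝 (d i))) :
    Tendsto (fun x => g x * (∏ i ∈ J, f i x - 1)) l (𝓝 (∑ i ∈ J, d i)) := by
  induction J using Finset.cons_induction with
  | empty => simpa using tendsto_const_nhds
  | cons j J hj ih =>
    have ih' := ih fun i hi => h i (mem_cons_of_mem hi)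
    have hlim := ((h j (mem_cons_self j J)).mul (tendsto_one_of_tendsto_mul_sub_one hg ih')).add ih'
    rw [mul_one, ← sum_cons hj] at hlim
    refine hlim.congr fun x => ?_
    rw [prod_cons]
    ring

lemma tendsto_mul_div_sub_sub_one (p q : ℂ) :
    Tendsto (fun z => z * ((z - p) / (z - q) - 1)) (cobounded ℂ) (𝓝 (q - p)) := by
  have hlim := tendsto_const_nhds (x := q - p).div
    (tendsto_const_nhds (x := (1 : ℂ)).sub (tendsto_const_nhds (x := q).mul tendsto_inv₀_cobounded))
    (by simp)
  rw [mul_zero, sub_zero, div_one] at hlim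
  refine hlim.congr' ((eventually_ne_cobounded 0).and (eventually_ne_cobounded q) |>.mono ?_)
  rintro z ⟨hz, hzq⟩
  have : z - q ≠ 0 := sub_ne_zero.2 hzq
  simp only [Pi.div_apply]
  field_simp
  ring

lemma tendsto_mul_prod_div_sub_sub_one (J : Finset ι) (a b : ι → ℂ) :
    Tendsto (fun z => z * (∏ i ∈ J, (z - a i) / (z - b i) - 1)) (cobounded ℂ)
      (𝓝 (∑ i ∈ J, (b i - a i))) :=
  tendsto_mul_prod_sub_one tendsto_id J fun i _ => tendsto_mul_div_sub_sub_one (a i) (b i)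

end Asymptotics

section Cayley

variable {t z w : ℂ}

noncomputable def cayley (t z : ℂ) : ℂ := (z - t) / (z - conj t)

noncomputable def cayleyInv (t w : ℂ) : ℂ := (conj t * w - t) / (w - 1)

lemma sub_conj_ne_zero (ht : 0 < t.im) (hz : 0 < z.im) : z - conj t ≠ 0 := fun h => by
  have := congrArg im h
  simp only [sub_im, conj_im, zero_im] at this
  linarith

lemma sub_one_ne_zero_of_mem_ball (hw : w ∈ ball (0 : ℂ) 1) : w - 1 ≠ 0 := by
  rw [sub_ne_zero]
  rintro rfl
  simp at hw

lemma cayley_mem_ball (ht : 0 < t.im) (hz : 0 < z.im) : cayley t z ∈ ball (0 : ℂ) 1 := by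
  have hnormSq : normSq (z - t) < normSq (z - conj t) := by
    simp only [normSq_apply, sub_re, sub_im, conj_re, conj_im]
    nlinarith [mul_pos hz ht]
  rw [mem_ball_zero_iff, cayley, norm_div, div_lt_one (norm_pos_iff.2 (sub_conj_ne_zero ht hz)),
    norm_def, norm_def]
  exact Real.sqrt_lt_sqrt (normSq_nonneg _) hnormSq

lemma im_cayleyInv_pos (ht : 0 < t.im) (hw : w ∈ ball (0 : ℂ) 1) : 0 < (cayleyInv t w).im := by
  have hnormSq : normSq w < 1 := by
    rw [← Complex.sq_norm]
    have := mem_ball_zero_iff.1 hw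
    nlinarith [norm_nonneg w]
  rw [cayleyInv, div_im, div_sub_div_same]
  refine div_pos ?_ (normSq_pos.2 (sub_one_ne_zero_of_mem_ball hw))
  simp only [sub_im, sub_re, mul_im, mul_re, conj_re, conj_im, one_re, one_im]
  rw [normSq_apply] at hnormSq
  nlinarith

lemma cayleyInv_cayley (ht : 0 < t.im) (hz : 0 < z.im) : cayleyInv t (cayley t z) = z := by
  have hden := sub_conj_ne_zero ht hz
  rw [cayleyInv, div_eq_iff (sub_one_ne_zero_of_mem_ball (cayley_mem_ball ht hz)), cayley]
  field_simp
  ring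

lemma cayley_ne_zero (ht : 0 < t.im) (hz : 0 < z.im) (hzt : z ≠ t) : cayley t z ≠ 0 :=
  div_ne_zero (sub_ne_zero.2 hzt) (sub_conj_ne_zero ht hz)

lemma differentiableOn_cayley (ht : 0 < t.im) :
    DifferentiableOn ℂ (cayley t) {z : ℂ | 0 < z.im} :=
  ((differentiable_id.sub_const _).differentiableOn).div
    ((differentiable_id.sub_const _).differentiableOn) fun _ hz => sub_conj_ne_zero ht hz

lemma differentiableOn_cayleyInv : DifferentiableOn ℂ (cayleyInv t) (ball 0 1) :=
  (((differentiable_id.const_mul _).sub_const _).differentiableOn).div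
    ((differentiable_id.sub_const _).differentiableOn) fun _ hw => sub_one_ne_zero_of_mem_ball hw

end Cayley

lemma eqOn_id_of_mapsTo_ball_of_fixedPoint {g : ℂ → ℂ} (hd : DifferentiableOn ℂ g (ball 0 1))
    (hm : Set.MapsTo g (ball 0 1) (ball 0 1)) (h₀ : g 0 = 0) {w : ℂ} (hw : w ∈ ball (0 : ℂ) 1)
    (hw₀ : w ≠ 0) (hgw : g w = w) : Set.EqOn g id (ball 0 1) := by
  have hslope : dslope g 0 w = 1 := by
    rw [dslope_of_ne g hw₀, slope_def_field, hgw, h₀, sub_zero, div_self hw₀]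
  have haffine := Complex.affine_of_mapsTo_ball_of_norm_dslope_eq_div hd
    (R₂ := 1) (by rw [h₀]; exact hm.mono_right ball_subset_closedBall) hw (by rw [hslope]; norm_num)
  intro z hz
  simpa [h₀, hslope] using haffine hz

lemma eqOn_id_of_mapsTo_upperHalfPlane {T : ℂ → ℂ}
    (hd : DifferentiableOn ℂ T {z : ℂ | 0 < z.im})
    (hm : Set.MapsTo T {z : ℂ | 0 < z.im} {z : ℂ | 0 < z.im})
    {t₁ t₂ : ℂ} (h₁ : 0 < t₁.im) (h₂ : 0 < t₂.im) (hne : t₂ ≠ t₁)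
    (hT₁ : T t₁ = t₁) (hT₂ : T t₂ = t₂) : Set.EqOn T id {z : ℂ | 0 < z.im} := by
  have hg : Set.EqOn (cayley t₁ ∘ T ∘ cayleyInv t₁) id (ball 0 1) := by
    refine eqOn_id_of_mapsTo_ball_of_fixedPoint ?_ ?_ ?_ (cayley_mem_ball h₁ h₂)
      (cayley_ne_zero h₁ h₂ hne) ?_
    · exact (differentiableOn_cayley h₁).comp (hd.comp differentiableOn_cayleyInv
        fun w hw => im_cayleyInv_pos h₁ hw) fun w hw => hm (im_cayleyInv_pos h₁ hw)
    · exact fun w hw => cayley_mem_ball h₁ (hm (im_cayleyInv_pos h₁ hw))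
    · simp [cayleyInv, cayley, hT₁]
    · simp only [Function.comp_apply, cayleyInv_cayley h₁ h₂, hT₂]
  intro z hz
  have hTz : 0 < (T z).im := hm hz
  have := congrArg (cayleyInv t₁) (hg (cayley_mem_ball h₁ hz))
  simpa only [Function.comp_apply, id, cayleyInv_cayley h₁ hz, cayleyInv_cayley h₁ hTz] using this

section FixedPointRhs

variable {ι : Type*} {A κ β : ℝ} {J : Finset ι} {c : ι → ℝ} {w : ℂ}

-- The equation of the theorem, solved for `t`, reads `t = fixedPointRhs A κ β J c (Φ t)`.
noncomputable def fixedPointRhs (A κ β : ℝ) (J : Finset ι) (c : ι → ℝ) (w : ℂ) : ℂ :=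
  A + κ * w / (w - 1) - β * ∑ i ∈ J, w / (w + c i)

lemma im_fixedPointRhs_pos (hκ : 0 < κ) (hβ : 0 ≤ β) (hc : ∀ i ∈ J, 0 < c i) (hw : w.im < 0) :
    0 < (fixedPointRhs A κ β J c w).im := by
  have hpole : 0 < ((κ : ℂ) * w / (w - 1)).im := by
    have hw1 : w - 1 ≠ 0 := fun h => by simp [sub_eq_zero.1 h] at hw
    have : ((κ : ℂ) * w / (w - 1)).im = κ * -w.im / normSq (w - 1) := by
      simp only [div_im, im_ofReal_mul, re_ofReal_mul, sub_re, sub_im, one_re, one_im]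
      ring
    rw [this]
    exact div_pos (mul_pos hκ (neg_pos.2 hw)) (normSq_pos.2 hw1)
  have hsum : (∑ i ∈ J, w / (w + c i)).im ≤ 0 := by
    rw [im_sum]
    refine sum_nonpos fun i hi => ?_
    have : (w / (w + c i)).im = c i * w.im / normSq (w + c i) := by
      simp only [div_im, add_re, add_im, ofReal_re, ofReal_im]
      ring
    rw [this]
    exact div_nonpos_of_nonpos_of_nonneg (mul_nonpos_of_nonneg_of_nonpos (hc i hi).le hw.le)
      (normSq_nonneg _)
  rw [fixedPointRhs, sub_im, add_im, ofReal_im, im_ofReal_mul]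
  nlinarith

lemma differentiableAt_fixedPointRhs (hw : w.im ≠ 0) :
    DifferentiableAt ℂ (fixedPointRhs A κ β J c) w := by
  have hne : ∀ x : ℝ, w + x ≠ 0 := fun x h => hw (by simpa using congrArg im h)
  have h1 : w - 1 ≠ 0 := by simpa [sub_eq_add_neg] using hne (-1)
  unfold fixedPointRhs
  fun_prop (disch := first | assumption | exact hne _)

lemma fixedPointRhs_conj : fixedPointRhs A κ β J c (conj w) = conj (fixedPointRhs A κ β J c w) := by
  simp [fixedPointRhs, map_sum]

lemma tendsto_fixedPointRhs_comp_div (hc : ∀ i ∈ J, 0 < c i) {Φ : ℂ → ℂ}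
    (hΦ : Tendsto (fun z => z * (Φ z - 1)) (cobounded ℂ) (𝓝 1)) :
    Tendsto (fun z => fixedPointRhs A κ β J c (Φ z) / z) (cobounded ℂ) (𝓝 κ) := by
  have hΦ₁ := tendsto_one_of_tendsto_mul_sub_one tendsto_id hΦ
  have hsum : Tendsto (fun z => ∑ i ∈ J, Φ z / (Φ z + c i)) (cobounded ℂ)
      (𝓝 (∑ i ∈ J, 1 / (1 + c i))) :=
    tendsto_finsetSum J fun i hi => hΦ₁.div (hΦ₁.add_const _) <| by
      exact_mod_cast (by linarith [hc i hi] : (1 : ℝ) + c i ≠ 0)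
  have hlim := ((tendsto_const_nhds (x := (A : ℂ))).mul tendsto_inv₀_cobounded).add
    ((tendsto_const_nhds (x := (κ : ℂ))).mul (hΦ₁.div hΦ one_ne_zero)) |>.sub
    ((tendsto_const_nhds (x := (β : ℂ))).mul (tendsto_inv₀_cobounded.mul hsum))
  rw [mul_zero, zero_add, div_one, mul_one, zero_mul, mul_zero, sub_zero] at hlim
  refine hlim.congr fun z => ?_
  simp only [fixedPointRhs, Pi.div_apply, div_eq_mul_inv, mul_inv]
  ring

end FixedPointRhs

lemma encard_le_two_of_conj_mem {S : Set ℂ} (hS : ∀ z ∈ S, z.im ≠ 0)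
    (hconj : ∀ z ∈ S, conj z ∈ S) (hup : {z ∈ S | 0 < z.im}.Subsingleton) : S.encard ≤ 2 := by
  set P := {z ∈ S | 0 < z.im}
  have hcover : S ⊆ P ∪ conj '' P := by
    intro z hz
    rcases (hS z hz).lt_or_gt with hneg | hpos
    · exact Or.inr ⟨conj z, ⟨hconj z hz, by simpa using hneg⟩, conj_conj z⟩
    · exact Or.inl ⟨hz, hpos⟩
  have hP : P.encard ≤ 1 := Set.encard_le_one_iff_subsingleton.2 hup
  calc S.encard ≤ P.encard + (conj '' P).encard :=
        (Set.encard_le_encard hcover).trans (Set.encard_union_le _ _)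
    _ ≤ 1 + 1 := add_le_add hP ((Set.encard_image_le _ _).trans hP)
    _ = 2 := by norm_num

section FixedPoints

variable {ι : Type*} {A κ β : ℝ} {J : Finset ι} {c : ι → ℝ} {Φ : ℂ → ℂ}

lemma subsingleton_fixedPoints_upperHalfPlane (hκ : 0 < κ) (hκ₁ : κ ≠ 1) (hβ : 0 ≤ β)
    (hc : ∀ i ∈ J, 0 < c i) (hΦd : DifferentiableOn ℂ Φ {z : ℂ | 0 < z.im})
    (hΦim : ∀ z : ℂ, 0 < z.im → (Φ z).im < 0)
    (hΦ : Tendsto (fun z => z * (Φ z - 1)) (cobounded ℂ) (𝓝 1)) :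
    {z : ℂ | 0 < z.im ∧ fixedPointRhs A κ β J c (Φ z) = z}.Subsingleton := by
  rintro t₁ ⟨h₁, hT₁⟩ t₂ ⟨h₂, hT₂⟩
  by_contra hne
  have hid := eqOn_id_of_mapsTo_upperHalfPlane (T := fun z => fixedPointRhs A κ β J c (Φ z))
    (fun z hz => (differentiableAt_fixedPointRhs (hΦim z hz).ne).comp_differentiableWithinAt z
      (hΦd z hz))
    (fun z hz => im_fixedPointRhs_pos hκ hβ hc (hΦim z hz)) h₁ h₂ (Ne.symm hne) hT₁ hT₂
  have hray : Tendsto (fun y : ℝ => I * y) atTop (cobounded ℂ) :=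
    (tendsto_mul_left_cobounded I_ne_zero).comp (RCLike.tendsto_ofReal_atTop_cobounded ℂ)
  have hone : ∀ᶠ y : ℝ in atTop, fixedPointRhs A κ β J c (Φ (I * y)) / (I * y) = 1 := by
    filter_upwards [eventually_gt_atTop 0] with y hy
    rw [show fixedPointRhs A κ β J c (Φ (I * y)) = I * y from
      hid (show 0 < (I * y).im by simpa using hy)]
    exact div_self (mul_ne_zero I_ne_zero (ofReal_ne_zero.2 hy.ne'))
  have hκ_eq := tendsto_nhds_unique ((tendsto_fixedPointRhs_comp_div hc hΦ).comp hray)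
    (tendsto_const_nhds.congr' (hone.mono fun _ h => h.symm))
  exact hκ₁ (ofReal_eq_one.1 hκ_eq)

lemma encard_nonreal_fixedPoints_le_two (hκ : 0 < κ) (hκ₁ : κ ≠ 1) (hβ : 0 ≤ β)
    (hc : ∀ i ∈ J, 0 < c i) (hΦd : DifferentiableOn ℂ Φ {z : ℂ | 0 < z.im})
    (hΦim : ∀ z : ℂ, 0 < z.im → (Φ z).im < 0) (hΦconj : ∀ z, Φ (conj z) = conj (Φ z))
    (hΦ : Tendsto (fun z => z * (Φ z - 1)) (cobounded ℂ) (𝓝 1)) :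
    {z : ℂ | z.im ≠ 0 ∧ fixedPointRhs A κ β J c (Φ z) = z}.encard ≤ 2 :=
  encard_le_two_of_conj_mem (fun _ hz => hz.1)
    (fun z ⟨hz, hT⟩ => ⟨by simpa using hz, by rw [hΦconj, fixedPointRhs_conj, hT]⟩)
    ((subsingleton_fixedPoints_upperHalfPlane hκ hκ₁ hβ hc hΦd hΦim hΦ).anti
      fun _ hz => ⟨hz.2, hz.1.2⟩)

end FixedPoints

theorem at_most_one_pair_of_nonreal_roots_general
    (n : ℕ) (γ : ℝ) (hγ1 : γ < 1)
    (κ : ℝ) (hκ : κ ∈ Set.Ioo (0 : ℝ) 1) (χ : ℝ)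
    (s : ℕ) (hs : 0 < s) (a b : ℕ → ℝ)
    (hab : ∀ i, 1 ≤ i → i ≤ s → a i < b i)
    (hba : ∀ i, 1 ≤ i → i < s → b i < a (i + 1))
    (hsum : ∑ i ∈ Finset.Icc 1 s, (b i - a i) = 1)
    (I : Finset ℕ)
    (c : ℕ → ℝ) (hc : ∀ i ∈ I, 0 < c i)
    (Φ : ℂ → ℂ)
    (hΦ : ∀ t : ℂ, Φ t = ∏ i ∈ Finset.Icc 1 s, (t - (a i : ℂ)) / (t - (b i : ℂ))) :
    Set.encard {t : ℂ | t.im ≠ 0 ∧ (∀ i ∈ Finset.Icc 1 s, t ≠ (b i : ℂ)) ∧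
      Φ t ≠ 1 ∧ (∀ i ∈ I, Φ t ≠ -(c i : ℂ)) ∧
      t - (κ : ℂ) * Φ t / (Φ t - 1)
          + ((κ : ℂ) / ((n : ℂ) * (1 - (γ : ℂ)))) * ∑ i ∈ I, Φ t / (Φ t + (c i : ℂ))
        = ((χ : ℂ) - (γ : ℂ) * (1 - (κ : ℂ))) / (1 - (γ : ℂ))} ≤ 2 := by
  obtain ⟨hκ₀, hκ₁⟩ := hκ
  obtain rfl : Φ = fun t : ℂ => ∏ i ∈ Icc 1 s, (t - a i) / (t - b i) := funext hΦ
  have hlim := tendsto_mul_prod_div_sub_sub_one (Icc 1 s) (fun i => (a i : ℂ)) (fun i => b i)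
  rw [show ∑ i ∈ Icc 1 s, ((b i : ℂ) - a i) = 1 by exact_mod_cast hsum] at hlim
  have hβ : 0 ≤ κ / (n * (1 - γ)) :=
    div_nonneg hκ₀.le (mul_nonneg n.cast_nonneg (sub_nonneg.2 hγ1.le))
  have hfix := encard_nonreal_fixedPoints_le_two (A := (χ - γ * (1 - κ)) / (1 - γ))
    hκ₀ hκ₁.ne hβ hc
    (fun t ht => (differentiableAt_prod_div_sub_ofReal _ a b ht.ne').differentiableWithinAt)
    (fun t ht => im_prod_div_sub_ofReal_neg ht hs hab hba) (prod_div_sub_ofReal_conj _ a b) hlim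
  refine (Set.encard_le_encard ?_).trans hfix
  rintro t ⟨ht, -, -, -, heq⟩
  refine ⟨ht, ?_⟩
  rw [fixedPointRhs]
  push_cast
  linear_combination -heq

/-- Proposition 3.8 of the paper (root count): with a piecewise bottom boundary
condition encoded by `0 = α̃_1 < b̃_1 < … < α̃_s < b̃_s`, `Σ(b̃_i − α̃_i) = 1`,
positive weights `c_i` for `i` in a finite index set `I` with `|I| ≤ n`,
`γ ∈ [0,1)`, `κ ∈ (0,1)` and `χ ∈ ℝ`, the system of equations
`Φ_s(t) ≠ 1`, `Φ_s(t) ≠ −c_i`, and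
`t − κΦ_s(t)/(Φ_s(t)−1) + (κ/(n(1−γ)))·Σ_{i∈I} Φ_s(t)/(Φ_s(t)+c_i)
  = (χ − γ(1−κ))/(1−γ)`
has at most one pair of complex conjugate non-real roots `t`: the set of
non-real solutions has at most two elements. -/
theorem at_most_one_pair_of_nonreal_roots
    (n : ℕ) (hn : 0 < n) (γ : ℝ) (hγ0 : 0 ≤ γ) (hγ1 : γ < 1)
    (κ : ℝ) (hκ : κ ∈ Set.Ioo (0 : ℝ) 1) (χ : ℝ)
    (s : ℕ) (hs : 0 < s) (a b : ℕ → ℝ)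
    (ha1 : a 1 = 0)
    (hab : ∀ i, 1 ≤ i → i ≤ s → a i < b i)
    (hba : ∀ i, 1 ≤ i → i < s → b i < a (i + 1))
    (hsum : ∑ i ∈ Finset.Icc 1 s, (b i - a i) = 1)
    (I : Finset ℕ) (hI : I.card ≤ n)
    (c : ℕ → ℝ) (hc : ∀ i ∈ I, 0 < c i)
    (Φ : ℂ → ℂ)
    (hΦ : ∀ t : ℂ, Φ t = ∏ i ∈ Finset.Icc 1 s, (t - (a i : ℂ)) / (t - (b i : ℂ))) :
    Set.encard {t : ℂ | t.im ≠ 0 ∧ (∀ i ∈ Finset.Icc 1 s, t ≠ (b i : ℂ)) ∧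
      Φ t ≠ 1 ∧ (∀ i ∈ I, Φ t ≠ -(c i : ℂ)) ∧
      t - (κ : ℂ) * Φ t / (Φ t - 1)
          + ((κ : ℂ) / ((n : ℂ) * (1 - (γ : ℂ)))) * ∑ i ∈ I, Φ t / (Φ t + (c i : ℂ))
        = ((χ : ℂ) - (γ : ℂ) * (1 - (κ : ℂ))) / (1 - (γ : ℂ))} ≤ 2 :=
  at_most_one_pair_of_nonreal_roots_general n γ hγ1 κ hκ χ s hs a b hab hba hsum I c hc Φ hΦ
end

section
/- Let n be a positive integer, γ ∈ [0,1) with γ ≠ 1, and let s be a positive integer with reals 0 = α̃_1 < b̃_1 < α̃_2 < b̃_2 < … < α̃_s < b̃_s. Let I be a finite index set with |I| ≤ n and c_i > 0 for i ∈ I. For real t with t ∉ {b̃_1,…,b̃_s}, define Φ_s(t) = Π_{i=1}^{s} (t − α̃_i)/(t − b̃_i) and J(t) = Φ_s(t) · [ 1/(Φ_s(t) − 1) − (1/(n(1−γ))) Σ_{i∈I} 1/(Φ_s(t) + c_i) ]. Let t_0 be a real number with t_0 ∉ {b̃_1,…,b̃_s}, Φ_s(t_0) ≠ 1, Φ_s(t_0)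 ≠ −c_i for all i ∈ I, and J'(t_0) ≠ 0. Then for real numbers κ ∈ (0,1) and χ, the function H(t) = t − κ·J(t) − (χ − γ(1−κ))/(1−γ) satisfies H(t_0) = 0 and H'(t_0) = 0 if and only if κ = 1/J'(t_0) and χ = (t_0 − J(t_0)/J'(t_0))·(1−γ) + γ·(1 − 1/J'(t_0)). -/
/-! Since `H t = t - κ J t - C` with `C` constant, `H' = 1 - κ J'`, so `H'(t₀) = 0` pins down
`κ = 1 / J'(t₀)`, and then `H(t₀) = 0` is linear in `χ`. Differentiability of `J` at `t₀` comes
for free from `J'(t₀) ≠ 0`, because `deriv` is `0` at points of non-differentiability. -/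

theorem hasDerivAt_id_sub_const_mul_sub_const {J : ℝ → ℝ} {J' t₀ : ℝ} (hJ : HasDerivAt J J' t₀)
    (κ C : ℝ) : HasDerivAt (fun t => t - κ * J t - C) (1 - κ * J') t₀ :=
  ((hasDerivAt_id t₀).sub (hJ.const_mul κ)).sub_const C

theorem double_root_iff {γ κ χ x j j' : ℝ} (hγ : γ ≠ 1) (hj' : j' ≠ 0) :
    (x - κ * j - (χ - γ * (1 - κ)) / (1 - γ) = 0 ∧ 1 - κ * j' = 0) ↔
      (κ = 1 / j' ∧ χ = (x - j / j') * (1 - γ) + γ * (1 - 1 / j')) := by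
  have hκ : 1 - κ * j' = 0 ↔ κ = 1 / j' := by
    rw [eq_div_iff hj', sub_eq_zero, eq_comm]
  rw [and_comm, hκ]
  refine and_congr_right fun hκ => ?_
  subst hκ
  rw [sub_eq_zero, eq_div_iff (sub_ne_zero.mpr hγ.symm), one_div_mul_eq_div]
  constructor <;> intro h <;> linarith

theorem frozen_boundary_parametrization_general
    (γ : ℝ) (hγ1 : γ < 1)
    (J : ℝ → ℝ)
    (t0 : ℝ)
    (hJ' : deriv J t0 ≠ 0)
    (κ χ : ℝ)
    (H : ℝ → ℝ)
    (hH : ∀ t, H t = t - κ * J t - (χ - γ * (1 - κ)) / (1 - γ)) :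
    (H t0 = 0 ∧ deriv H t0 = 0) ↔
      (κ = 1 / deriv J t0 ∧
        χ = (t0 - J t0 / deriv J t0) * (1 - γ) + γ * (1 - 1 / deriv J t0)) := by
  have hHJ : HasDerivAt H (1 - κ * deriv J t0) t0 := by
    rw [funext hH]
    exact hasDerivAt_id_sub_const_mul_sub_const
      (differentiableAt_of_deriv_ne_zero hJ').hasDerivAt κ _
  rw [hHJ.deriv, hH t0]
  exact double_root_iff hγ1.ne hJ'

/-- Theorem 3.8 of the paper (parametrization of the frozen boundary): with
`Φ_s(t) = ∏_{i=1}^s (t−α̃_i)/(t−b̃_i)` and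
`J(t) = Φ_s(t)·[1/(Φ_s(t)−1) − (1/(n(1−γ)))·Σ_{i∈I} 1/(Φ_s(t)+c_i)]`,
for a point `t₀` which is not a pole of `J` and with `J'(t₀) ≠ 0`, the function
`H(t) = t − κJ(t) − (χ − γ(1−κ))/(1−γ)` has a double root at `t₀`
(`H(t₀) = 0 ∧ H'(t₀) = 0`) if and only if
`κ = 1/J'(t₀)` and `χ = (t₀ − J(t₀)/J'(t₀))(1−γ) + γ(1 − 1/J'(t₀))`. -/
theorem frozen_boundary_parametrization
    (n : ℕ) (hn : 0 < n) (γ : ℝ) (hγ0 : 0 ≤ γ) (hγ1 : γ < 1)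
    (s : ℕ) (hs : 0 < s) (a b : ℕ → ℝ)
    (ha1 : a 1 = 0)
    (hab : ∀ i, 1 ≤ i → i ≤ s → a i < b i)
    (hba : ∀ i, 1 ≤ i → i < s → b i < a (i + 1))
    (I : Finset ℕ) (hI : I.card ≤ n)
    (c : ℕ → ℝ) (hc : ∀ i ∈ I, 0 < c i)
    (Φ : ℝ → ℝ)
    (hΦ : ∀ t, Φ t = ∏ i ∈ Finset.Icc 1 s, (t - a i) / (t - b i))
    (J : ℝ → ℝ)
    (hJ : ∀ t, J t = Φ t * (1 / (Φ t - 1)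
        - (1 / ((n : ℝ) * (1 - γ))) * ∑ i ∈ I, 1 / (Φ t + c i)))
    (t0 : ℝ)
    (ht0b : ∀ i ∈ Finset.Icc 1 s, t0 ≠ b i)
    (ht01 : Φ t0 ≠ 1)
    (ht0c : ∀ i ∈ I, Φ t0 ≠ -c i)
    (hJ' : deriv J t0 ≠ 0)
    (κ χ : ℝ) (hκ : κ ∈ Set.Ioo (0 : ℝ) 1)
    (H : ℝ → ℝ)
    (hH : ∀ t, H t = t - κ * J t - (χ - γ * (1 - κ)) / (1 - γ)) :
    (H t0 = 0 ∧ deriv H t0 = 0) ↔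
      (κ = 1 / deriv J t0 ∧
        χ = (t0 - J t0 / deriv J t0) * (1 - γ) + γ * (1 - 1 / deriv J t0)) :=
  frozen_boundary_parametrization_general γ hγ1 J t0 hJ' κ χ H hH
end
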